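/- arXiv:0912.2444 — 4 statements merged into one kernel-verified Lean document; each statement's English description precedes it below -/
import Mathlib

section
/- Fix a real constant c > 0. For every N and every N_1, N_2 with 1 ≤ N_1, N_2 ≤ N − 1 and N_1 + N_2 = N, let M_1 be a Binomial(⌊cN⌋, N_1/N) random variable and M_2 = ⌊cN⌋ − M_1; conditionally on M_1, let G(N_1, M_1) and G(N_2, M_2) be independent Erdős–Rényi directed multigraphs on [N_1] and [N_2] with M_1 and M_2 edges respectively. Then E[I(G(N, ⌊cN⌋))] ≥ E[I(G(N_1, M_1))] + E[I(G(N_2, M_2))], where I(·) denotes the maximum cardinality of an independent set. -/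
open Filter
open scoped Classical

/-- Expectation of `f` when an edge list of `M` directed edges on vertex set `Fin N` is
drawn uniformly at random (i.e. the `M` edges are i.i.d. uniform ordered pairs). -/
noncomputable def expER (N M : ℕ) (f : (Fin M → Fin N × Fin N) → ℝ) : ℝ :=
  (∑ E : Fin M → Fin N × Fin N, f E) / (Fintype.card (Fin M → Fin N × Fin N) : ℝ)

/-- `S` is an independent set for the edge list `E`: no edge has both endpoints in `S`. -/
def IsIndepSet {N M : ℕ} (E : Fin M → Fin N × Fin N) (S : Finset (Fin N)) : Prop :=
  ∀ m : Fin M, ¬((E m).1 ∈ S ∧ (E m).2 ∈ S)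

/-- The maximum cardinality of an independent set of the edge list `E`. -/
noncomputable def maxIndepER {N M : ℕ} (E : Fin M → Fin N × Fin N) : ℕ :=
  Finset.sup ((Finset.univ : Finset (Finset (Fin N))).filter (IsIndepSet E)) Finset.card

/-- `P(Binomial(M, θ) = m)`. -/
noncomputable def binomW (M : ℕ) (θ : ℝ) (m : ℕ) : ℝ :=
  (M.choose m : ℝ) * θ ^ m * (1 - θ) ^ (M - m)

/-!
Interpolate one edge at a time. Adding an edge `(u, v)` lowers the independence number by one
exactly when `u` and `v` both lie in the core (the vertices common to all maximum independent
sets), and leaves it unchanged otherwise. Hence, if the core meets the two blocks `[N₁]`, `[N₂]` of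
`[N]` in `T₁` and `T₂` vertices, a uniform edge costs `((T₁ + T₂) / N)²` in expectation, while an
edge that lands in block `i` with probability `Nᵢ / N` and is uniform there costs
`(N₁ / N) (T₁ / N₁)² + (N₂ / N) (T₂ / N₂)²`, which is larger by convexity. So replacing the edges of
`G(N, M)` by such block edges one at a time can only lower the expected independence number. In
the all-block model the number of edges in block 1 is `Binomial(M, N₁ / N)`, given which the blocks
are independent uniform multigraphs, and the independence number is additive over the blocks.
-/

open Finset

section SampleSetMean

variable {α β : Type*} [DecidableEq α]

lemma image_univ_fin_cons {M : ℕ} (a : α) (F : Fin M → α) :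
    univ.image (Fin.cons a F : Fin (M + 1) → α) = insert a (univ.image F) := by
  ext b
  simp [Fin.exists_fin_succ, eq_comm]

variable [Fintype α]

/-- For a probability vector `p`, this is `𝔼[g {X₁, …, X_M}]` with `X₁, …, X_M` i.i.d. of
law `p`. -/
noncomputable def sampleSetMean (p : α → ℝ) (g : Finset α → ℝ) (M : ℕ) : ℝ :=
  ∑ F : Fin M → α, (∏ i, p (F i)) * g (univ.image F)

@[simp]
lemma sampleSetMean_zero (p : α → ℝ) (g : Finset α → ℝ) : sampleSetMean p g 0 = g ∅ := by
  simp [sampleSetMean]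

lemma sampleSetMean_succ (p : α → ℝ) (g : Finset α → ℝ) (M : ℕ) :
    sampleSetMean p g (M + 1) = ∑ a, p a * sampleSetMean p (fun s => g (insert a s)) M := by
  rw [sampleSetMean, ← (Fin.consEquiv fun _ => α).sum_comp, Fintype.sum_prod_type]
  refine sum_congr rfl fun a _ => ?_
  rw [sampleSetMean, mul_sum]
  refine sum_congr rfl fun F _ => ?_
  simp [Fin.consEquiv, Fin.prod_univ_succ, image_univ_fin_cons, mul_assoc]

lemma sum_mul_sampleSetMean {ι : Type*} (t : Finset ι) (c : ι → ℝ) (p : α → ℝ)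
    (g : ι → Finset α → ℝ) (M : ℕ) :
    ∑ i ∈ t, c i * sampleSetMean p (g i) M = sampleSetMean p (fun s => ∑ i ∈ t, c i * g i s) M := by
  simp only [sampleSetMean, mul_sum]
  rw [sum_comm]
  exact sum_congr rfl fun F _ => sum_congr rfl fun i _ => mul_left_comm _ _ _

lemma sampleSetMean_const_mul (c : ℝ) (p : α → ℝ) (g : Finset α → ℝ) (M : ℕ) :
    sampleSetMean p (fun s => c * g s) M = c * sampleSetMean p g M := by
  simpa using (sum_mul_sampleSetMean {()} (fun _ => c) p (fun _ => g) M).symm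

lemma sampleSetMean_const_mul_weight (t : ℝ) (p : α → ℝ) (g : Finset α → ℝ) (M : ℕ) :
    sampleSetMean (fun a => t * p a) g M = t ^ M * sampleSetMean p g M := by
  simp only [sampleSetMean, mul_sum, prod_mul_distrib, prod_const, card_univ, Fintype.card_fin,
    mul_assoc]

lemma sampleSetMean_add_const {p : α → ℝ} (hp : ∑ a, p a = 1) (g : Finset α → ℝ) (c : ℝ)
    (M : ℕ) : sampleSetMean p (fun s => g s + c) M = sampleSetMean p g M + c := by
  have hmass : ∑ F : Fin M → α, ∏ i, p (F i) = 1 := by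
    rw [← Fintype.prod_sum (fun (_ : Fin M) a => p a), hp, prod_const_one]
  simp only [sampleSetMean, mul_add, sum_add_distrib, ← sum_mul, hmass, one_mul]

lemma sampleSetMean_const_add {p : α → ℝ} (hp : ∑ a, p a = 1) (c : ℝ) (g : Finset α → ℝ)
    (M : ℕ) : sampleSetMean p (fun s => c + g s) M = c + sampleSetMean p g M := by
  simpa only [add_comm c] using sampleSetMean_add_const hp g c M

lemma sampleSetMean_mono {p : α → ℝ} (hp : ∀ a, 0 ≤ p a) {g h : Finset α → ℝ}
    (hgh : ∀ s, g s ≤ h s) (M : ℕ) : sampleSetMean p g M ≤ sampleSetMean p h M :=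
  sum_le_sum fun _ _ => mul_le_mul_of_nonneg_left (hgh _) (prod_nonneg fun _ _ => hp _)

lemma sampleSetMean_image_equiv [Fintype β] [DecidableEq β] (e : α ≃ β) (p : β → ℝ)
    (g : Finset β → ℝ) (M : ℕ) :
    sampleSetMean (fun a => p (e a)) (fun s => g (s.image e)) M = sampleSetMean p g M := by
  unfold sampleSetMean
  exact Fintype.sum_equiv ((Equiv.refl _).arrowCongr e) _ _ fun F => by
    simp only [image_image]
    rfl

theorem sampleSetMean_image_le_of_insert [Fintype β] [DecidableEq β] (ι : β → α) {p : β → ℝ}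
    {q : α → ℝ} (hp : ∀ b, 0 ≤ p b) (hq : ∀ a, 0 ≤ q a) {g : Finset α → ℝ}
    (hg : ∀ A, ∑ b, p b * g (insert (ι b) A) ≤ ∑ a, q a * g (insert a A)) (M : ℕ)
    (A : Finset α) :
    sampleSetMean p (fun s => g (A ∪ s.image ι)) M ≤ sampleSetMean q (fun s => g (A ∪ s)) M := by
  induction M generalizing A with
  | zero => simp
  | succ M ih =>
    calc sampleSetMean p (fun s => g (A ∪ s.image ι)) (M + 1)
        = ∑ b, p b * sampleSetMean p (fun s => g (insert (ι b) A ∪ s.image ι)) M := by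
          simp only [sampleSetMean_succ, image_insert, union_insert, insert_union]
      _ ≤ ∑ b, p b * sampleSetMean q (fun s => g (insert (ι b) A ∪ s)) M :=
          sum_le_sum fun b _ => mul_le_mul_of_nonneg_left (ih _) (hp b)
      _ = sampleSetMean q (fun s => ∑ b, p b * g (insert (ι b) (A ∪ s))) M := by
          simp only [sum_mul_sampleSetMean, insert_union]
      _ ≤ sampleSetMean q (fun s => ∑ a, q a * g (insert a (A ∪ s))) M :=
          sampleSetMean_mono hq (fun s => hg _) M
      _ = sampleSetMean q (fun s => g (A ∪ s)) (M + 1) := by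
          simp only [sampleSetMean_succ, sum_mul_sampleSetMean, union_insert]

end SampleSetMean

noncomputable def uniformWeight (α : Type*) [Fintype α] (_ : α) : ℝ :=
  (Fintype.card α : ℝ)⁻¹

lemma uniformWeight_nonneg (α : Type*) [Fintype α] (a : α) : 0 ≤ uniformWeight α a :=
  inv_nonneg.mpr (Nat.cast_nonneg _)

lemma sum_uniformWeight (α : Type*) [Fintype α] [Nonempty α] : ∑ a, uniformWeight α a = 1 := by
  simp [uniformWeight]

section Mixture

variable {β₁ β₂ : Type*} [Fintype β₁] [DecidableEq β₁] [Fintype β₂] [DecidableEq β₂]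

theorem sampleSetMean_sumElim (p₁ : β₁ → ℝ) (p₂ : β₂ → ℝ) (f : Finset β₁ → Finset β₂ → ℝ)
    (M : ℕ) :
    sampleSetMean (Sum.elim p₁ p₂) (fun s => f s.toLeft s.toRight) M =
      ∑ m ∈ range (M + 1), (M.choose m : ℝ) *
        sampleSetMean p₁ (fun P => sampleSetMean p₂ (f P) (M - m)) m := by
  induction M generalizing f with
  | zero =>
    simp
    rfl
  | succ M ih =>
    set u : ℕ → ℕ → ℝ := fun i j => sampleSetMean p₁ (fun P => sampleSetMean p₂ (f P) j) i
    have hleft : ∑ b, p₁ b * sampleSetMean (Sum.elim p₁ p₂)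
        (fun s => f (insert b s.toLeft) s.toRight) M =
          ∑ m ∈ range (M + 1), (M.choose m : ℝ) * u (m + 1) (M - m) := by
      simp only [fun b => ih (fun P Q => f (insert b P) Q), mul_sum, u, sampleSetMean_succ]
      rw [sum_comm]
      refine sum_congr rfl fun m _ => ?_
      simp only [mul_left_comm _ (M.choose m : ℝ), ← mul_sum, sum_mul_sampleSetMean]
    have hright : ∑ c, p₂ c * sampleSetMean (Sum.elim p₁ p₂)
        (fun s => f s.toLeft (insert c s.toRight)) M =
          ∑ m ∈ range (M + 1), (M.choose m : ℝ) * u m (M + 1 - m) := by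
      simp only [fun c => ih (fun P Q => f P (insert c Q)), mul_sum, u]
      rw [sum_comm]
      refine sum_congr rfl fun m hm => ?_
      rw [Nat.sub_add_comm (Nat.lt_succ_iff.mp (mem_range.mp hm))]
      simp only [sampleSetMean_succ, mul_left_comm _ (M.choose m : ℝ), ← mul_sum,
        sum_mul_sampleSetMean]
    rw [sampleSetMean_succ, Fintype.sum_sum_type]
    simp only [Sum.elim_inl, Sum.elim_inr, toLeft_insert_inl, toRight_insert_inl,
      toLeft_insert_inr, toRight_insert_inr]
    rw [hleft, hright, add_comm]
    exact (sum_choose_succ_mul u M).symm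

theorem sampleSetMean_mixture (t : ℝ) (p₁ : β₁ → ℝ) (p₂ : β₂ → ℝ)
    (f : Finset β₁ → Finset β₂ → ℝ) (M : ℕ) :
    sampleSetMean (Sum.elim (fun a => t * p₁ a) (fun b => (1 - t) * p₂ b))
        (fun s => f s.toLeft s.toRight) M =
      ∑ m ∈ range (M + 1), binomW M t m *
        sampleSetMean p₁ (fun P => sampleSetMean p₂ (f P) (M - m)) m := by
  rw [sampleSetMean_sumElim]
  refine sum_congr rfl fun m _ => ?_
  simp only [sampleSetMean_const_mul_weight, sampleSetMean_const_mul, binomW]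
  ring

end Mixture

section IndepNum

variable {V W : Type*}

def IsIndepIn (A : Finset (V × V)) (S : Finset V) : Prop :=
  ∀ e ∈ A, ¬(e.1 ∈ S ∧ e.2 ∈ S)

lemma IsIndepIn.anti {A B : Finset (V × V)} {S : Finset V} (hAB : A ⊆ B) (h : IsIndepIn B S) :
    IsIndepIn A S :=
  fun e he => h e (hAB he)

variable [Fintype V]

noncomputable def indepNum (A : Finset (V × V)) : ℕ :=
  (univ.filter (IsIndepIn A)).sup card

variable {A : Finset (V × V)}

lemma IsIndepIn.card_le_indepNum {S : Finset V} (h : IsIndepIn A S) : S.card ≤ indepNum A :=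
  le_sup (mem_filter.mpr ⟨mem_univ _, h⟩)

lemma indepNum_le {k : ℕ} (h : ∀ S, IsIndepIn A S → S.card ≤ k) : indepNum A ≤ k :=
  Finset.sup_le fun S hS => h S (mem_filter.mp hS).2

lemma exists_isIndepIn_card_eq (A : Finset (V × V)) :
    ∃ S, IsIndepIn A S ∧ S.card = indepNum A := by
  have hne : (univ.filter (IsIndepIn A)).Nonempty := ⟨∅, by simp [IsIndepIn]⟩
  obtain ⟨S, hS, hcard⟩ := exists_mem_eq_sup _ hne card
  exact ⟨S, (mem_filter.mp hS).2, hcard.symm⟩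

variable [DecidableEq V]

lemma indepNum_insert_le (e : V × V) : indepNum (insert e A) ≤ indepNum A :=
  indepNum_le fun _ hS => (hS.anti (subset_insert e A)).card_le_indepNum

noncomputable def indepCore (A : Finset (V × V)) : Finset V :=
  univ.filter fun v => ∀ S, IsIndepIn A S → S.card = indepNum A → v ∈ S

lemma mem_indepCore {v : V} :
    v ∈ indepCore A ↔ ∀ S, IsIndepIn A S → S.card = indepNum A → v ∈ S := by
  simp [indepCore]

lemma indepNum_insert_eq_self {u v : V}
    (h : ¬(u ∈ indepCore A ∧ v ∈ indepCore A)) : indepNum (insert (u, v) A) = indepNum A := by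
  obtain ⟨S, hS, hcard, huv⟩ : ∃ S, IsIndepIn A S ∧ S.card = indepNum A ∧ ¬(u ∈ S ∧ v ∈ S) := by
    by_contra! hall
    exact h ⟨mem_indepCore.mpr fun S hS hc => (hall S hS hc).1,
      mem_indepCore.mpr fun S hS hc => (hall S hS hc).2⟩
  have hS' : IsIndepIn (insert (u, v) A) S := by
    simpa [IsIndepIn, forall_mem_insert] using And.intro huv hS
  exact (indepNum_insert_le _).antisymm (hcard ▸ hS'.card_le_indepNum)

lemma indepNum_insert_add_one {u v : V} (hu : u ∈ indepCore A) (hv : v ∈ indepCore A) :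
    indepNum (insert (u, v) A) + 1 = indepNum A := by
  obtain ⟨S, hS, hcard⟩ := exists_isIndepIn_card_eq A
  have huS : u ∈ S := mem_indepCore.mp hu S hS hcard
  have hge : indepNum A ≤ indepNum (insert (u, v) A) + 1 := by
    have : IsIndepIn (insert (u, v) A) (S.erase u) := by
      simp only [IsIndepIn, forall_mem_insert, mem_erase, ne_eq, not_true_eq_false, false_and,
        not_false_eq_true, true_and]
      exact fun e he h => hS e he ⟨h.1.2, h.2.2⟩
    have := this.card_le_indepNum
    rw [card_erase_of_mem huS, hcard] at this
    omega
  have hlt : indepNum (insert (u, v) A) < indepNum A := by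
    refine (indepNum_insert_le _).lt_of_ne fun heq => ?_
    obtain ⟨S', hS', hcard'⟩ := exists_isIndepIn_card_eq (insert (u, v) A)
    have hmax : S'.card = indepNum A := hcard'.trans heq
    exact hS' (u, v) (mem_insert_self _ _) ⟨mem_indepCore.mp hu S' (hS'.anti (subset_insert _ _))
      hmax, mem_indepCore.mp hv S' (hS'.anti (subset_insert _ _)) hmax⟩
  omega

noncomputable def coreIndicator (A : Finset (V × V)) (v : V) : ℝ :=
  if v ∈ indepCore A then 1 else 0

lemma indepNum_insert (A : Finset (V × V)) (u v : V) :
    (indepNum (insert (u, v) A) : ℝ) = indepNum A - coreIndicator A u * coreIndicator A v := by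
  by_cases h : u ∈ indepCore A ∧ v ∈ indepCore A
  · rw [← indepNum_insert_add_one h.1 h.2]
    simp [coreIndicator, h.1, h.2]
  · rw [indepNum_insert_eq_self h]
    unfold coreIndicator
    split_ifs <;> simp_all

lemma sum_indepNum_insert_map [Fintype W] (f : W → V) (A : Finset (V × V)) :
    ∑ e : W × W, (indepNum (insert (Prod.map f f e) A) : ℝ) =
      (Fintype.card W : ℝ) ^ 2 * indepNum A - (∑ w, coreIndicator A (f w)) ^ 2 := by
  simp only [Fintype.sum_prod_type, Prod.map_apply, indepNum_insert, sum_sub_distrib, sum_const,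
    card_univ, nsmul_eq_mul, ← sum_mul_sum, sq]
  ring

end IndepNum

section Relabel

variable {V W : Type*} [Fintype V] [Fintype W] [DecidableEq W]

lemma indepNum_le_indepNum_image {f : V → W} (hf : Function.Injective f) (A : Finset (V × V)) :
    indepNum A ≤ indepNum (A.image (Prod.map f f)) := by
  obtain ⟨S, hS, hcard⟩ := exists_isIndepIn_card_eq A
  have : IsIndepIn (A.image (Prod.map f f)) (S.image f) := fun e he h => by
    obtain ⟨d, hd, rfl⟩ := mem_image.mp he
    exact hS d hd (by simpa [hf.mem_finset_image] using h)
  simpa [card_image_of_injective _ hf, hcard] using this.card_le_indepNum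

lemma indepNum_image_equiv [DecidableEq V] (e : V ≃ W) (A : Finset (V × V)) :
    indepNum (A.image (Prod.map e e)) = indepNum A := by
  refine le_antisymm ?_ (indepNum_le_indepNum_image e.injective A)
  simpa [image_image, Prod.map_comp_map] using
    indepNum_le_indepNum_image e.symm.injective (A.image (Prod.map e e))

end Relabel

noncomputable def meanIndepNum (V : Type*) [Fintype V] [DecidableEq V] (M : ℕ) : ℝ :=
  sampleSetMean (uniformWeight (V × V)) (fun A => indepNum A) M

lemma meanIndepNum_congr {V W : Type*} [Fintype V] [DecidableEq V] [Fintype W] [DecidableEq W]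
    (e : V ≃ W) (M : ℕ) : meanIndepNum V M = meanIndepNum W M := by
  rw [meanIndepNum, meanIndepNum, ← sampleSetMean_image_equiv (e.prodCongr e)]
  unfold uniformWeight
  simp [Equiv.prodCongr_apply, indepNum_image_equiv, Fintype.card_congr e]

lemma maxIndepER_eq_indepNum {N M : ℕ} (E : Fin M → Fin N × Fin N) :
    maxIndepER E = indepNum (univ.image E) := by
  unfold maxIndepER indepNum
  congr 1
  refine filter_congr fun S _ => ?_
  simp [IsIndepSet, IsIndepIn]

lemma expER_maxIndepER (N M : ℕ) :
    expER N M (fun E => (maxIndepER E : ℝ)) = meanIndepNum (Fin N) M := by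
  simp only [expER, meanIndepNum, sampleSetMean, uniformWeight, maxIndepER_eq_indepNum, prod_const,
    card_univ, Fintype.card_fin, Fintype.card_fun, div_eq_mul_inv, sum_mul]
  push_cast
  exact sum_congr rfl fun _ _ => by ring

section Blocks

variable (V₁ V₂ : Type*) [Fintype V₁] [Fintype V₂]

def blockEdge : (V₁ × V₁) ⊕ (V₂ × V₂) → (V₁ ⊕ V₂) × (V₁ ⊕ V₂) :=
  Sum.elim (Prod.map .inl .inl) (Prod.map .inr .inr)

noncomputable def blockRatio : ℝ :=
  Fintype.card V₁ / (Fintype.card V₁ + Fintype.card V₂)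

noncomputable def blockWeight : (V₁ × V₁) ⊕ (V₂ × V₂) → ℝ :=
  Sum.elim (fun a => blockRatio V₁ V₂ * uniformWeight (V₁ × V₁) a)
    (fun b => (1 - blockRatio V₁ V₂) * uniformWeight (V₂ × V₂) b)

variable {V₁ V₂}

lemma indepNum_image_blockEdge [DecidableEq V₁] [DecidableEq V₂]
    (s : Finset ((V₁ × V₁) ⊕ (V₂ × V₂))) :
    indepNum (s.image (blockEdge V₁ V₂)) = indepNum s.toLeft + indepNum s.toRight := by
  refine le_antisymm (indepNum_le fun S hS => ?_) ?_
  · have h₁ : IsIndepIn s.toLeft S.toLeft := fun e he h =>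
      hS _ (mem_image_of_mem _ (mem_toLeft.mp he)) (by simpa [blockEdge] using h)
    have h₂ : IsIndepIn s.toRight S.toRight := fun e he h =>
      hS _ (mem_image_of_mem _ (mem_toRight.mp he)) (by simpa [blockEdge] using h)
    rw [← card_toLeft_add_card_toRight]
    exact add_le_add h₁.card_le_indepNum h₂.card_le_indepNum
  · obtain ⟨S₁, hS₁, hcard₁⟩ := exists_isIndepIn_card_eq s.toLeft
    obtain ⟨S₂, hS₂, hcard₂⟩ := exists_isIndepIn_card_eq s.toRight
    have : IsIndepIn (s.image (blockEdge V₁ V₂)) (S₁.disjSum S₂) := by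
      simp only [IsIndepIn, forall_mem_image, Sum.forall, blockEdge]
      exact ⟨fun e he => by simpa using hS₁ e (mem_toLeft.mpr he),
        fun e he => by simpa using hS₂ e (mem_toRight.mpr he)⟩
    simpa [card_disjSum, hcard₁, hcard₂] using this.card_le_indepNum

lemma blockWeight_nonneg (x : (V₁ × V₁) ⊕ (V₂ × V₂)) : 0 ≤ blockWeight V₁ V₂ x := by
  have h₁ : 0 ≤ blockRatio V₁ V₂ := by unfold blockRatio; positivity
  have h₂ : 0 ≤ 1 - blockRatio V₁ V₂ := by
    rw [sub_nonneg, blockRatio]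
    exact div_le_one_of_le₀ (le_add_of_nonneg_right (Nat.cast_nonneg _)) (by positivity)
  cases x <;> simp only [blockWeight, uniformWeight, Sum.elim_inl, Sum.elim_inr] <;> positivity

end Blocks

section Interpolation

variable {V₁ V₂ : Type*} [Fintype V₁] [DecidableEq V₁] [Fintype V₂] [DecidableEq V₂]
  [Nonempty V₁] [Nonempty V₂]

theorem sum_blockWeight_mul_indepNum_insert_le (A : Finset ((V₁ ⊕ V₂) × (V₁ ⊕ V₂))) :
    ∑ x, blockWeight V₁ V₂ x * (indepNum (insert (blockEdge V₁ V₂ x) A) : ℝ) ≤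
      ∑ e, uniformWeight _ e * (indepNum (insert e A) : ℝ) := by
  have hall := sum_indepNum_insert_map id A
  simp only [Prod.map_id, id_eq, Fintype.sum_sum_type] at hall
  set n₁ : ℝ := (Fintype.card V₁ : ℝ)
  set n₂ : ℝ := (Fintype.card V₂ : ℝ)
  set T₁ := ∑ a, coreIndicator A (.inl a)
  set T₂ := ∑ b, coreIndicator A (.inr b)
  have hn₁ : 0 < n₁ := by simp [n₁, Fintype.card_pos]
  have hn₂ : 0 < n₂ := by simp [n₂, Fintype.card_pos]
  have hblock : ∑ x, blockWeight V₁ V₂ x * (indepNum (insert (blockEdge V₁ V₂ x) A) : ℝ) =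
      indepNum A - (T₁ ^ 2 / n₁ + T₂ ^ 2 / n₂) / (n₁ + n₂) := by
    simp only [Fintype.sum_sum_type, blockWeight, blockEdge, Sum.elim_inl, Sum.elim_inr,
      ← mul_sum, sum_indepNum_insert_map, blockRatio, uniformWeight, Fintype.card_prod,
      Nat.cast_mul]
    field_simp
    ring
  have hfull : ∑ e, uniformWeight _ e * (indepNum (insert e A) : ℝ) =
      indepNum A - (T₁ + T₂) ^ 2 / (n₁ + n₂) / (n₁ + n₂) := by
    have hn : (Fintype.card (V₁ ⊕ V₂) : ℝ) = n₁ + n₂ := by simp [n₁, n₂]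
    simp only [uniformWeight, Fintype.card_prod, Nat.cast_mul, hn]
    rw [← mul_sum, hall, hn]
    field_simp
  have hconvex : (T₁ + T₂) ^ 2 / (n₁ + n₂) ≤ T₁ ^ 2 / n₁ + T₂ ^ 2 / n₂ := by
    simpa [Fin.sum_univ_two] using
      sq_sum_div_le_sum_sq_div univ ![T₁, T₂] (g := ![n₁, n₂]) (by simp [hn₁, hn₂])
  rw [hblock, hfull]
  gcongr

theorem sum_binomW_mul_meanIndepNum_le (M : ℕ) :
    ∑ m ∈ range (M + 1), binomW M (blockRatio V₁ V₂) m *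
        (meanIndepNum V₁ m + meanIndepNum V₂ (M - m)) ≤ meanIndepNum (V₁ ⊕ V₂) M := by
  calc ∑ m ∈ range (M + 1), binomW M (blockRatio V₁ V₂) m *
        (meanIndepNum V₁ m + meanIndepNum V₂ (M - m))
      = sampleSetMean (blockWeight V₁ V₂)
          (fun s => (indepNum s.toLeft : ℝ) + indepNum s.toRight) M := by
        rw [blockWeight, sampleSetMean_mixture (f := fun P Q => (indepNum P : ℝ) + indepNum Q)]
        simp only [sampleSetMean_const_add (sum_uniformWeight _),
          sampleSetMean_add_const (sum_uniformWeight _), meanIndepNum]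
    _ = sampleSetMean (blockWeight V₁ V₂)
          (fun s => (indepNum (∅ ∪ s.image (blockEdge V₁ V₂)) : ℝ)) M := by
        simp only [empty_union, indepNum_image_blockEdge, Nat.cast_add]
    _ ≤ sampleSetMean (uniformWeight _) (fun s => (indepNum (∅ ∪ s) : ℝ)) M :=
        sampleSetMean_image_le_of_insert (g := fun B => (indepNum B : ℝ)) _ blockWeight_nonneg
          (uniformWeight_nonneg _) sum_blockWeight_mul_indepNum_insert_le M ∅
    _ = meanIndepNum (V₁ ⊕ V₂) M := by simp only [empty_union, meanIndepNum]

end Interpolation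

theorem indep_set_interpolation_general (c : ℝ) (N N₁ N₂ : ℕ)
    (h₁ : 1 ≤ N₁) (h₂ : 1 ≤ N₂) (hsum : N₁ + N₂ = N) :
    expER N ⌊c * (N : ℝ)⌋₊ (fun E => (maxIndepER E : ℝ)) ≥
      ∑ m ∈ Finset.range (⌊c * (N : ℝ)⌋₊ + 1),
        binomW ⌊c * (N : ℝ)⌋₊ ((N₁ : ℝ) / (N : ℝ)) m *
          (expER N₁ m (fun E => (maxIndepER E : ℝ)) +
            expER N₂ (⌊c * (N : ℝ)⌋₊ - m) (fun E => (maxIndepER E : ℝ))) := by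
  subst hsum
  have : Nonempty (Fin N₁) := Fin.pos_iff_nonempty.mp h₁
  have : Nonempty (Fin N₂) := Fin.pos_iff_nonempty.mp h₂
  have hratio : blockRatio (Fin N₁) (Fin N₂) = (N₁ : ℝ) / ((N₁ + N₂ : ℕ) : ℝ) := by
    simp [blockRatio]
  simp only [expER_maxIndepER, ← meanIndepNum_congr finSumFinEquiv, ← hratio]
  exact sum_binomW_mul_meanIndepNum_le _

/-- Interpolation inequality for independent sets: with `M₁ ~ Binomial(⌊cN⌋, N₁/N)` and
`M₂ = ⌊cN⌋ - M₁`, and `G(N₁, M₁), G(N₂, M₂)` conditionally independent Erdős–Rényi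
multigraphs, `E[I(G(N,⌊cN⌋))] ≥ E[I(G(N₁,M₁))] + E[I(G(N₂,M₂))]`. -/
theorem indep_set_interpolation (c : ℝ) (hc : 0 < c) (N N₁ N₂ : ℕ)
    (h₁ : 1 ≤ N₁) (h₁' : N₁ ≤ N - 1) (h₂ : 1 ≤ N₂) (h₂' : N₂ ≤ N - 1)
    (hsum : N₁ + N₂ = N) :
    expER N ⌊c * (N : ℝ)⌋₊ (fun E => (maxIndepER E : ℝ)) ≥
      ∑ m ∈ Finset.range (⌊c * (N : ℝ)⌋₊ + 1),
        binomW ⌊c * (N : ℝ)⌋₊ ((N₁ : ℝ) / (N : ℝ)) m *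
          (expER N₁ m (fun E => (maxIndepER E : ℝ)) +
            expER N₂ (⌊c * (N : ℝ)⌋₊ - m) (fun E => (maxIndepER E : ℝ))) :=
  indep_set_interpolation_general c N N₁ N₂ h₁ h₂ hsum
end

section
/- Let G be a finite multigraph on [N] with Ising Hamiltonian H(x) = Σ_{i∈[N]} h(x_i) + Σ_{edges (i,j)} g(x_i, x_j) for x ∈ {0,1}^N, where h(1) = B, h(0) = −B for some B ∈ ℝ, and g(a,b) = −β if a = b, g(a,b) = β if a ≠ b, for some β > 0. Let H_0 > H_1 > ⋯ be the distinct values of {H(x) : x ∈ {0,1}^N}, let M be the largest index m with H_m ≥ H_0 − 2β (taking M to be the index of the smallest value if all values are ≥ H_0 − 2β), let C_m = {x : H(x) = H_m}, and for i, k ∈ [N] write i ∼_m k if x_i = x_k for every x ∈ C_0 ∪ ⋯ ∪ C_m. Let G + e be the multigraph obtained by adding an edge e = (i,k), so H_{G+e}(x) = H(x) + g(x_i, x_k), and let H(G+e) = max_x H_{G+e}(x). Then: (1) if i ≁_0 k then H(G+e) = H_0 + β; (2) if i ∼_m k but i ≁_{m+1} k for some m ≤ M − 1, then H(G+e) = H_{m+1}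 + β; (3) if i ∼_m k for all m ≤ M, then H(G+e) = H_0 − β. -/
open scoped Classical

/-- The antiferromagnetic Ising Hamiltonian with parameters `β, B` of the multigraph on
`[N]` given by the edge list `edges`: node potentials `B` (spin `true`) and `-B` (spin
`false`), and edge potentials `-β` if the endpoint spins agree and `β` if they differ. -/
noncomputable def isingHam (β B : ℝ) {N : ℕ} (edges : List (Fin N × Fin N))
    (x : Fin N → Bool) : ℝ :=
  (∑ i : Fin N, if x i then B else -B) +
    (edges.map (fun e => if x e.1 = x e.2 then -β else β)).sum

/-- `i ∼_m k`: the spins at `i` and `k` agree in every configuration whose Hamiltonian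
value is one of the top `m + 1` values `Hvals 0 > Hvals 1 > ⋯ > Hvals m`. -/
def SimRel {N : ℕ} (Ham : (Fin N → Bool) → ℝ) (Hvals : ℕ → ℝ) (m : ℕ)
    (i k : Fin N) : Prop :=
  ∀ x : Fin N → Bool, (∃ m' ≤ m, Ham x = Hvals m') → x i = x k

/-!
Adding the edge `(i,k)` shifts the Hamiltonian by `-β` on configurations with `x i = x k` and
by `+β` on the others, so the new ground state value is the larger of `H₀ - β` and `β` plus the
best value of a configuration separating `i` from `k`. The relations `∼_m` locate that value:
it is `H₀` if `i ≁₀ k`, it is `H_{m+1}` if `i ∼_m k` but `i ≁_{m+1} k`, and it is below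
`H₀ - 2β` if `i ∼_M k`, in which case the old ground states, which all agree at `i` and `k`, win.
-/

theorem ciSup_eq_of_forall_le_of_eq {ι α : Type*} [ConditionallyCompleteLattice α]
    {f : ι → α} {b : α} (hle : ∀ i, f i ≤ b) {i₀ : ι} (hi₀ : f i₀ = b) : ⨆ i, f i = b :=
  haveI : Nonempty ι := ⟨i₀⟩
  le_antisymm (ciSup_le hle) (hi₀ ▸ le_ciSup ⟨b, Set.forall_mem_range.2 hle⟩ i₀)

section Enumeration

variable {α β : Type*} {f : α → β} {v : ℕ → β} {L : ℕ}

theorem exists_le_eq_of_image_Iic_eq_range (h : v '' Set.Iic L = Set.range f) (x : α) :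
    ∃ m ≤ L, f x = v m := by
  obtain ⟨m, hm, hfx⟩ : f x ∈ v '' Set.Iic L := h ▸ Set.mem_range_self x
  exact ⟨m, hm, hfx.symm⟩

theorem exists_eq_zero_of_image_Iic_eq_range (h : v '' Set.Iic L = Set.range f) :
    ∃ x, f x = v 0 := by
  rw [← Set.mem_range, ← h]
  exact Set.mem_image_of_mem v (Set.mem_Iic.2 (Nat.zero_le L))

theorem le_zero_of_image_Iic_eq_range [Preorder β] (hv : AntitoneOn v (Set.Iic L))
    (h : v '' Set.Iic L = Set.range f) (x : α) : f x ≤ v 0 := by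
  obtain ⟨m, hm, hfx⟩ := exists_le_eq_of_image_Iic_eq_range h x
  exact hfx ▸ hv (Set.mem_Iic.2 (Nat.zero_le L)) hm (Nat.zero_le m)

end Enumeration

section SimRel

variable {N : ℕ} {Ham : (Fin N → Bool) → ℝ} {Hvals : ℕ → ℝ} {i k : Fin N}

theorem simRel_zero_iff :
    SimRel Ham Hvals 0 i k ↔ ∀ x, Ham x = Hvals 0 → x i = x k := by
  simp [SimRel]

theorem simRel_succ_iff {m : ℕ} :
    SimRel Ham Hvals (m + 1) i k ↔
      SimRel Ham Hvals m i k ∧ ∀ x, Ham x = Hvals (m + 1) → x i = x k := by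
  simp only [SimRel, Nat.le_succ_iff, or_and_right, exists_or, exists_eq_left, or_imp,
    forall_and]

theorem SimRel.lt_of_ne {m m' : ℕ} (h : SimRel Ham Hvals m i k) {x : Fin N → Bool}
    (hx : x i ≠ x k) (hm' : Ham x = Hvals m') : m < m' := by
  by_contra! hle
  exact hx (h x ⟨m', hle, hm'⟩)

end SimRel

section AddEdge

variable {N : ℕ} {β B : ℝ} {edges : List (Fin N × Fin N)} {i k : Fin N} {x : Fin N → Bool}

theorem isingHam_append_edge :
    isingHam β B (edges ++ [(i, k)]) x =
      isingHam β B edges x + if x i = x k then -β else β := by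
  simp only [isingHam, List.map_append, List.map_cons, List.map_nil, List.sum_append,
    List.sum_cons, List.sum_nil, add_zero, add_assoc]

theorem isingHam_append_edge_of_eq (h : x i = x k) :
    isingHam β B (edges ++ [(i, k)]) x = isingHam β B edges x - β := by
  rw [isingHam_append_edge, if_pos h, sub_eq_add_neg]

theorem isingHam_append_edge_of_ne (h : x i ≠ x k) :
    isingHam β B (edges ++ [(i, k)]) x = isingHam β B edges x + β := by
  rw [isingHam_append_edge, if_neg h]

theorem isingHam_append_edge_le {c : ℝ}
    (hagree : ∀ y : Fin N → Bool, y i = y k → isingHam β B edges y - β ≤ c)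
    (hsep : ∀ y : Fin N → Bool, y i ≠ y k → isingHam β B edges y + β ≤ c)
    (y : Fin N → Bool) : isingHam β B (edges ++ [(i, k)]) y ≤ c := by
  by_cases h : y i = y k
  · exact (isingHam_append_edge_of_eq h).trans_le (hagree y h)
  · exact (isingHam_append_edge_of_ne h).trans_le (hsep y h)

end AddEdge

/-- Effect of adding one edge `e = (i,k)` on the Ising ground state value (Lemma 1 of the
paper): `Hvals 0 > Hvals 1 > ⋯ > Hvals L` enumerates the distinct values of the
Hamiltonian of `G`, and `M` is the largest index `m ≤ L` with `Hvals m ≥ Hvals 0 − 2β`.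
Then the ground state value of `G + e` equals `Hvals 0 + β` if `i ≁₀ k`; equals
`Hvals (m+1) + β` if `i ∼_m k` but `i ≁_{m+1} k` for some `m ≤ M − 1`; and equals
`Hvals 0 − β` if `i ∼_m k` for all `m ≤ M`. -/
theorem ising_ground_state_add_edge (N : ℕ) (β B : ℝ) (hβ : 0 < β)
    (edges : List (Fin N × Fin N))
    (L : ℕ) (Hvals : ℕ → ℝ)
    (hanti : ∀ m m' : ℕ, m < m' → m' ≤ L → Hvals m' < Hvals m)
    (hrange : Hvals '' Set.Iic L = Set.range (isingHam β B edges))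
    (M : ℕ) (hML : M ≤ L)
    (hM : Hvals 0 - 2 * β ≤ Hvals M)
    (hMmax : ∀ m : ℕ, m ≤ L → Hvals 0 - 2 * β ≤ Hvals m → m ≤ M)
    (i k : Fin N) :
    (¬ SimRel (isingHam β B edges) Hvals 0 i k →
      (⨆ x : Fin N → Bool, isingHam β B (edges ++ [(i, k)]) x) = Hvals 0 + β) ∧
    (∀ m : ℕ, m + 1 ≤ M →
      SimRel (isingHam β B edges) Hvals m i k →
      ¬ SimRel (isingHam β B edges) Hvals (m + 1) i k →
      (⨆ x : Fin N → Bool, isingHam β B (edges ++ [(i, k)]) x) = Hvals (m + 1) + β) ∧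
    ((∀ m : ℕ, m ≤ M → SimRel (isingHam β B edges) Hvals m i k) →
      (⨆ x : Fin N → Bool, isingHam β B (edges ++ [(i, k)]) x) = Hvals 0 - β) := by
  have hv : AntitoneOn Hvals (Set.Iic L) :=
    StrictAntiOn.antitoneOn fun a _ b hb hab => hanti a b hab hb
  have hle0 := le_zero_of_image_Iic_eq_range hv hrange
  have hlevel := exists_le_eq_of_image_Iic_eq_range hrange
  refine ⟨fun hns => ?_, fun m hmM hsim hns => ?_, fun hall => ?_⟩
  · obtain ⟨x, hx, hne⟩ : ∃ x, isingHam β B edges x = Hvals 0 ∧ x i ≠ x k := by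
      simpa [simRel_zero_iff] using hns
    refine ciSup_eq_of_forall_le_of_eq (isingHam_append_edge_le (fun y _ => ?_) fun y _ => ?_)
      (by rw [isingHam_append_edge_of_ne hne, hx])
    all_goals linarith [hle0 y]
  · obtain ⟨x, hx, hne⟩ : ∃ x, isingHam β B edges x = Hvals (m + 1) ∧ x i ≠ x k := by
      simpa [simRel_succ_iff, hsim] using hns
    have hMm : Hvals M ≤ Hvals (m + 1) := hv (hmM.trans hML) hML hmM
    refine ciSup_eq_of_forall_le_of_eq (isingHam_append_edge_le (fun y _ => ?_) fun y hy => ?_)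
      (by rw [isingHam_append_edge_of_ne hne, hx])
    · linarith [hle0 y]
    · obtain ⟨m', hm'L, hy'⟩ := hlevel y
      have : Hvals m' ≤ Hvals (m + 1) := hv (hmM.trans hML) hm'L (hsim.lt_of_ne hy hy')
      linarith
  · obtain ⟨x, hx⟩ := exists_eq_zero_of_image_Iic_eq_range hrange
    have hagree : x i = x k := hall 0 (Nat.zero_le M) x ⟨0, le_rfl, hx⟩
    refine ciSup_eq_of_forall_le_of_eq (isingHam_append_edge_le (fun y _ => ?_) fun y hy => ?_)
      (by rw [isingHam_append_edge_of_eq hagree, hx])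
    · linarith [hle0 y]
    · obtain ⟨m', hm'L, hy'⟩ := hlevel y
      have hMm' := (hall M le_rfl).lt_of_ne hy hy'
      have : Hvals m' < Hvals 0 - 2 * β := lt_of_not_ge fun h => (hMmax m' hm'L h).not_gt hMm'
      linarith
end

section
/- Fix an integer K ≥ 2. Let G_0 be a K-SAT instance on variable set [N] (a finite list of clauses, each given by K variable indices in [N] and a forbidden tuple in {0,1}^K), let H(G_0) be the maximum over assignments x ∈ {0,1}^N of the number of satisfied clauses, and let O* ⊆ [N] be the set of frozen variables, i.e., variables taking the same value in every assignment achieving H(G_0). Add one random clause e, with K variable indices drawn i.i.d. uniformly from [N] and forbidden tuple drawn uniformly from {0,1}^K, independently. Then H(G_0 + e) ∈ {H(G_0), H(G_0) + 1}, and P(H(G_0 + e) = H(G_0)) = 2^{−K} (|O*|/N)^K. -/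
open scoped Classical

/-- A clause of a `K`-SAT instance on variables `Fin N`: `K` variable indices together
with the forbidden tuple `a ∈ {0,1}^K`. -/
abbrev Clause (N K : ℕ) := (Fin K → Fin N) × (Fin K → Bool)

/-- The number of clauses of the list `cls` satisfied by the assignment `x`; clause `cl`
is satisfied iff the values of `x` on its variables differ from the forbidden tuple. -/
def numSat {N K : ℕ} (cls : List (Clause N K)) (x : Fin N → Bool) : ℕ :=
  cls.countP (fun cl => decide ((fun j => x (cl.1 j)) ≠ cl.2))

/-- The maximum number of simultaneously satisfiable clauses of the instance `cls`. -/
noncomputable def ksatVal {N K : ℕ} (cls : List (Clause N K)) : ℕ :=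
  Finset.sup (Finset.univ : Finset (Fin N → Bool)) (numSat cls)

/-- `O*`: the set of frozen variables, i.e. variables taking the same value in every
assignment achieving the optimum `ksatVal cls`. -/
noncomputable def frozenVars {N K : ℕ} (cls : List (Clause N K)) : Finset (Fin N) :=
  (Finset.univ : Finset (Fin N)).filter (fun i => ∀ x y : Fin N → Bool,
    numSat cls x = ksatVal cls → numSat cls y = ksatVal cls → x i = y i)

/-!
Adding a clause `e` raises the optimum by at most one, and it keeps the optimum exactly when
every optimal assignment violates `e`, i.e. sets the variables of `e` to the forbidden tuple.
Since the optimal assignments agree precisely on the frozen variables, this happens iff all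
variables of `e` are frozen and the forbidden tuple is their common optimal value. Such clauses
are in bijection with `K`-tuples of frozen variables, so there are `|O*|^K` of them among the
`N^K 2^K` clauses.
-/

section KSat

variable {N K : ℕ}

lemma numSat_append_singleton (cls : List (Clause N K)) (e : Clause N K) (x : Fin N → Bool) :
    numSat (cls ++ [e]) x = numSat cls x + if (fun j => x (e.1 j)) ≠ e.2 then 1 else 0 := by
  simp [numSat, List.countP_append, List.countP_singleton]

lemma numSat_le_ksatVal (cls : List (Clause N K)) (x : Fin N → Bool) :
    numSat cls x ≤ ksatVal cls :=
  Finset.le_sup (Finset.mem_univ x)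

lemma exists_numSat_eq_ksatVal (cls : List (Clause N K)) :
    ∃ x, numSat cls x = ksatVal cls := by
  obtain ⟨x, -, hx⟩ := Finset.exists_mem_eq_sup _ Finset.univ_nonempty (numSat cls)
  exact ⟨x, hx.symm⟩

lemma ksatVal_le_ksatVal_append (cls : List (Clause N K)) (e : Clause N K) :
    ksatVal cls ≤ ksatVal (cls ++ [e]) :=
  Finset.sup_le fun x _ => by
    have := numSat_le_ksatVal (cls ++ [e]) x
    rw [numSat_append_singleton] at this
    omega

lemma ksatVal_append_le_succ (cls : List (Clause N K)) (e : Clause N K) :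
    ksatVal (cls ++ [e]) ≤ ksatVal cls + 1 :=
  Finset.sup_le fun x _ => by
    have := numSat_le_ksatVal cls x
    rw [numSat_append_singleton]
    split <;> omega

lemma ksatVal_append_eq_iff (cls : List (Clause N K)) (e : Clause N K) :
    ksatVal (cls ++ [e]) = ksatVal cls ↔
      ∀ x, numSat cls x = ksatVal cls → (fun j => x (e.1 j)) = e.2 := by
  constructor
  · intro h x hx
    by_contra hsat
    have := numSat_le_ksatVal (cls ++ [e]) x
    rw [numSat_append_singleton, if_pos hsat, hx] at this
    omega
  · intro hviol
    refine le_antisymm (Finset.sup_le fun x _ => ?_) (ksatVal_le_ksatVal_append cls e)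
    rw [numSat_append_singleton]
    rcases (numSat_le_ksatVal cls x).eq_or_lt with hx | hx
    · simp [hviol x hx, hx]
    · split <;> omega

lemma mem_frozenVars_iff (cls : List (Clause N K)) {x₀ : Fin N → Bool}
    (hx₀ : numSat cls x₀ = ksatVal cls) (i : Fin N) :
    i ∈ frozenVars cls ↔ ∀ x, numSat cls x = ksatVal cls → x i = x₀ i := by
  simp only [frozenVars, Finset.mem_filter, Finset.mem_univ, true_and]
  exact ⟨fun h x hx => h x x₀ hx hx₀,
    fun h x y hx hy => (h x hx).trans (h y hy).symm⟩

lemma forall_optimal_violates_iff (cls : List (Clause N K)) {x₀ : Fin N → Bool}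
    (hx₀ : numSat cls x₀ = ksatVal cls) (e : Clause N K) :
    (∀ x, numSat cls x = ksatVal cls → (fun j => x (e.1 j)) = e.2) ↔
      ∀ j, e.1 j ∈ frozenVars cls ∧ e.2 j = x₀ (e.1 j) := by
  simp only [mem_frozenVars_iff cls hx₀, funext_iff]
  constructor
  · intro h j
    exact ⟨fun x hx => (h x hx j).trans (h x₀ hx₀ j).symm, (h x₀ hx₀ j).symm⟩
  · intro h x hx j
    rw [(h j).1 x hx, (h j).2]

end KSat

lemma card_filter_forall_mem_and_eq {α β : Type*} [Fintype α] [Fintype β] [DecidableEq α]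
    [DecidableEq β] (K : ℕ) (s : Finset α) (f : α → β) :
    (Finset.univ.filter fun e : (Fin K → α) × (Fin K → β) =>
      ∀ j, e.1 j ∈ s ∧ e.2 j = f (e.1 j)).card = s.card ^ K := by
  have hgraph : (Finset.univ.filter fun e : (Fin K → α) × (Fin K → β) =>
      ∀ j, e.1 j ∈ s ∧ e.2 j = f (e.1 j)) =
      (Fintype.piFinset fun _ => s).image fun v => (v, f ∘ v) := by
    ext ⟨v, a⟩
    simp only [Finset.mem_filter, Finset.mem_univ, true_and, Finset.mem_image,
      Fintype.mem_piFinset, Prod.mk.injEq]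
    constructor
    · intro h
      exact ⟨v, fun j => (h j).1, rfl, funext fun j => ((h j).2).symm⟩
    · rintro ⟨w, hw, rfl, rfl⟩
      exact fun j => ⟨hw j, rfl⟩
  rw [hgraph, Finset.card_image_of_injective _ fun v w h => (Prod.mk.inj h).1,
    Fintype.card_piFinset, Finset.prod_const, Finset.card_univ, Fintype.card_fin]

theorem ksat_add_clause_general (K : ℕ) (N : ℕ) (cls : List (Clause N K)) :
    (∀ e : Clause N K,
      ksatVal (cls ++ [e]) = ksatVal cls ∨ ksatVal (cls ++ [e]) = ksatVal cls + 1) ∧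
    ((((Finset.univ : Finset (Clause N K)).filter
          (fun e => ksatVal (cls ++ [e]) = ksatVal cls)).card : ℝ) /
        (Fintype.card (Clause N K) : ℝ) =
      (2 : ℝ)⁻¹ ^ K * (((frozenVars cls).card : ℝ) / (N : ℝ)) ^ K) := by
  refine ⟨fun e => ?_, ?_⟩
  · have := ksatVal_le_ksatVal_append cls e
    have := ksatVal_append_le_succ cls e
    omega
  obtain ⟨x₀, hx₀⟩ := exists_numSat_eq_ksatVal cls
  have hcount : ((Finset.univ : Finset (Clause N K)).filter
      (fun e => ksatVal (cls ++ [e]) = ksatVal cls)).card = (frozenVars cls).card ^ K := by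
    simp only [ksatVal_append_eq_iff, forall_optimal_violates_iff cls hx₀]
    exact card_filter_forall_mem_and_eq K (frozenVars cls) x₀
  have hcard : Fintype.card (Clause N K) = N ^ K * 2 ^ K := by simp
  rw [hcount, hcard]
  push_cast
  rw [div_pow, inv_pow, inv_mul_eq_div, div_div, mul_comm]

/-- Effect of adding one random clause `e` (indices i.i.d. uniform in `[N]`, forbidden
tuple uniform in `{0,1}^K`, independent) to a `K`-SAT instance `G₀`:
`H(G₀ + e) ∈ {H(G₀), H(G₀) + 1}`, and `P(H(G₀ + e) = H(G₀)) = 2^{-K} (|O*|/N)^K`. -/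
theorem ksat_add_clause (K : ℕ) (hK : 2 ≤ K) (N : ℕ) (cls : List (Clause N K)) :
    (∀ e : Clause N K,
      ksatVal (cls ++ [e]) = ksatVal cls ∨ ksatVal (cls ++ [e]) = ksatVal cls + 1) ∧
    ((((Finset.univ : Finset (Clause N K)).filter
          (fun e => ksatVal (cls ++ [e]) = ksatVal cls)).card : ℝ) /
        (Fintype.card (Clause N K) : ℝ) =
      (2 : ℝ)⁻¹ ^ K * (((frozenVars cls).card : ℝ) / (N : ℝ)) ^ K) :=
  ksat_add_clause_general K N cls
end

section
/- Let α ∈ (0,1), let C ≥ 0, and let (a_N)_{N≥1} be a sequence of nonnegative real numbers satisfying a_{N} ≥ a_{N_1} + a_{N_2} − C N^α for all N_1, N_2 ≥ 1 with N = N_1 + N_2. Then the sequence a_N / N converges in [0, +∞] as N → ∞ (i.e., lim_{N→∞} a_N/N exists as an extended nonnegative real; in particular, if a_N/N is bounded, it converges to a finite limit). -/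
open Filter
open scoped ENNReal

/-!
Correcting `a` to `b M = a M - D * M ^ α`, with `D * (2 - 2 ^ α) = C * 2 ^ α`, gives
`b (2 * M) ≥ 2 * b M`, so `a (2 ^ k * n) ≥ 2 ^ k * n * g n` with `g n = max 0 (b n / n)`.
Writing any `N` as `2 ^ k * n + r` with `2 * r < N` and recursing on `r` costs at most the
geometric series `C * N ^ α * (1 + 2 ^ (-α) + 2 ^ (-2 * α) + ⋯)`, hence
`liminf a N / N ≥ g n` for every `n`. As `a n / n ≤ g n + D * n ^ (α - 1)` and `α < 1`,
the limsup does not exceed the liminf.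
-/

def NearSuperadditive (a : ℕ → ℝ) (C α : ℝ) : Prop :=
  ∀ N₁ N₂ : ℕ, 1 ≤ N₁ → 1 ≤ N₂ → a N₁ + a N₂ - C * ((N₁ + N₂ : ℕ) : ℝ) ^ α ≤ a (N₁ + N₂)

lemma Filter.tendsto_liminf_of_le_liminf_add {ι : Type*} {l : Filter ι} [l.NeBot]
    {f e : ι → ℝ≥0∞} (he : Tendsto e l (nhds 0)) (hf : ∀ᶠ i in l, f i ≤ liminf f l + e i) :
    Tendsto f l (nhds (liminf f l)) := by
  have hlim : Tendsto (fun i => liminf f l + e i) l (nhds (liminf f l)) := by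
    simpa using he.const_add (liminf f l)
  refine tendsto_of_liminf_eq_limsup rfl (le_antisymm ?_ liminf_le_limsup)
  calc limsup f l ≤ limsup (fun i => liminf f l + e i) l := limsup_le_limsup hf
    _ = liminf f l := hlim.limsup_eq

lemma tendsto_natCast_rpow_sub_one_atTop {α : ℝ} (hα : α < 1) :
    Tendsto (fun N : ℕ => (N : ℝ) ^ (α - 1)) atTop (nhds 0) := by
  have := (tendsto_rpow_neg_atTop (sub_pos.2 hα)).comp tendsto_natCast_atTop_atTop
  simpa [Function.comp_def] using this

lemma Nat.exists_pow_two_mul_le_lt_two_mul {n N : ℕ} (hn : 0 < n) (hN : n ≤ N) :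
    ∃ k, 2 ^ k * n ≤ N ∧ N < 2 * (2 ^ k * n) := by
  refine ⟨Nat.log 2 (N / n), ?_, ?_⟩
  · rw [← Nat.le_div_iff_mul_le hn]
    exact Nat.pow_log_le_self 2 (Nat.div_pos hN hn).ne'
  · rw [← mul_assoc, ← pow_succ', ← Nat.div_lt_iff_lt_mul hn]
    exact Nat.lt_pow_succ_log_self one_lt_two _

namespace NearSuperadditive

variable {a : ℕ → ℝ} {C α : ℝ}

noncomputable def doublingConst (C α : ℝ) : ℝ := C * 2 ^ α / (2 - 2 ^ α)

lemma two_rpow_lt_two (hα : α < 1) : (2 : ℝ) ^ α < 2 := by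
  simpa using Real.rpow_lt_rpow_of_exponent_lt one_lt_two hα

lemma doublingConst_nonneg (hC : 0 ≤ C) (hα : α < 1) : 0 ≤ doublingConst C α :=
  div_nonneg (by positivity) (sub_nonneg.2 (two_rpow_lt_two hα).le)

noncomputable def corrected (a : ℕ → ℝ) (C α : ℝ) (M : ℕ) : ℝ :=
  a M - doublingConst C α * (M : ℝ) ^ α

lemma two_mul_corrected_le (h : NearSuperadditive a C α) (hα : α < 1) {M : ℕ} (hM : 1 ≤ M) :
    2 * corrected a C α M ≤ corrected a C α (2 * M) := by
  have hsum := h M M hM hM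
  have hD : doublingConst C α * (2 - 2 ^ α) = C * 2 ^ α :=
    div_mul_cancel₀ _ (sub_pos.2 (two_rpow_lt_two hα)).ne'
  have hpow : ((M + M : ℕ) : ℝ) ^ α = 2 ^ α * (M : ℝ) ^ α := by
    rw [← two_mul, Nat.cast_mul, Nat.cast_two, Real.mul_rpow zero_le_two (Nat.cast_nonneg M)]
  rw [hpow, ← two_mul, ← two_mul M] at hsum
  unfold corrected
  rw [Nat.cast_mul, Nat.cast_two, Real.mul_rpow zero_le_two (Nat.cast_nonneg M)]
  linear_combination hsum - (M : ℝ) ^ α * hD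

lemma pow_two_mul_corrected_le (h : NearSuperadditive a C α) (hα : α < 1) {n : ℕ} (hn : 1 ≤ n)
    (k : ℕ) : 2 ^ k * corrected a C α n ≤ corrected a C α (2 ^ k * n) := by
  induction k with
  | zero => simp
  | succ k ih =>
    have hmul : 2 ^ (k + 1) * n = 2 * (2 ^ k * n) := by ring
    rw [hmul, pow_succ', mul_assoc]
    calc 2 * (2 ^ k * corrected a C α n) ≤ 2 * corrected a C α (2 ^ k * n) := by linarith
      _ ≤ corrected a C α (2 * (2 ^ k * n)) :=
        two_mul_corrected_le h hα (Nat.one_le_iff_ne_zero.2 (by positivity))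

noncomputable def dyadicRate (a : ℕ → ℝ) (C α : ℝ) (n : ℕ) : ℝ :=
  max 0 (corrected a C α n / n)

lemma dyadicRate_nonneg (n : ℕ) : 0 ≤ dyadicRate a C α n := le_max_left _ _

lemma mul_dyadicRate_le (h : NearSuperadditive a C α) (ha : ∀ N, 0 ≤ a N) (hC : 0 ≤ C)
    (hα : α < 1) {n : ℕ} (hn : 1 ≤ n) (k : ℕ) :
    ((2 ^ k * n : ℕ) : ℝ) * dyadicRate a C α n ≤ a (2 ^ k * n) := by
  rcases le_total (corrected a C α n / n) 0 with hneg | hpos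
  · rw [dyadicRate, max_eq_left hneg, mul_zero]
    exact ha _
  · have hn' : (n : ℝ) ≠ 0 := by positivity
    calc ((2 ^ k * n : ℕ) : ℝ) * dyadicRate a C α n = 2 ^ k * corrected a C α n := by
          rw [dyadicRate, max_eq_right hpos]
          push_cast
          field_simp
      _ ≤ corrected a C α (2 ^ k * n) := pow_two_mul_corrected_le h hα hn k
      _ ≤ a (2 ^ k * n) :=
          sub_le_self _ (mul_nonneg (doublingConst_nonneg hC hα) (by positivity))

lemma div_le_dyadicRate_add {n : ℕ} (hn : 1 ≤ n) :
    a n / n ≤ dyadicRate a C α n + doublingConst C α * (n : ℝ) ^ (α - 1) := by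
  have hn' : (n : ℝ) ≠ 0 := by positivity
  have hsplit : a n / n = corrected a C α n / n + doublingConst C α * (n : ℝ) ^ (α - 1) := by
    rw [corrected, Real.rpow_sub_one hn']
    ring
  rw [hsplit]
  exact add_le_add_left (le_max_right _ _) _

/-- `E = splittingConst C α` solves `E * 2 ^ (-α) + C = E`: it sums the geometric series of
splitting costs. -/
noncomputable def splittingConst (C α : ℝ) : ℝ := C * 2 ^ α / (2 ^ α - 1)

lemma splittingConst_nonneg (hC : 0 ≤ C) (hα : 0 < α) : 0 ≤ splittingConst C α :=
  div_nonneg (by positivity) (sub_nonneg.2 (Real.one_le_rpow one_le_two hα.le))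

lemma splittingConst_mul_rpow_add_le (hC : 0 ≤ C) (hα : 0 < α) {r N : ℕ} (hrN : 2 * r ≤ N) :
    splittingConst C α * (r : ℝ) ^ α + C * (N : ℝ) ^ α ≤ splittingConst C α * (N : ℝ) ^ α := by
  have h2α : 1 < (2 : ℝ) ^ α := Real.one_lt_rpow one_lt_two hα
  have hE : splittingConst C α * (2 ^ α - 1) = C * 2 ^ α :=
    div_mul_cancel₀ _ (sub_pos.2 h2α).ne'
  have hr : (2 : ℝ) ^ α * (r : ℝ) ^ α ≤ (N : ℝ) ^ α := by
    rw [← Real.mul_rpow zero_le_two (Nat.cast_nonneg r)]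
    exact Real.rpow_le_rpow (by positivity) (by exact_mod_cast hrN) hα.le
  have hrE := mul_le_mul_of_nonneg_left hr (splittingConst_nonneg hC hα)
  refine le_of_mul_le_mul_left ?_ (zero_lt_one.trans h2α)
  linear_combination hrE - (N : ℝ) ^ α * hE

lemma sub_mul_sub_le_of_dyadic (h : NearSuperadditive a C α) (ha : ∀ N, 0 ≤ a N) (hC : 0 ≤ C)
    (hα : 0 < α) {n : ℕ} (hn : 1 ≤ n) {g : ℝ} (hg0 : 0 ≤ g)
    (hg : ∀ k, ((2 ^ k * n : ℕ) : ℝ) * g ≤ a (2 ^ k * n)) (N : ℕ) :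
    ((N : ℝ) - n) * g - splittingConst C α * (N : ℝ) ^ α ≤ a N := by
  refine Nat.strong_induction_on N fun N ih => ?_
  have hcost : 0 ≤ splittingConst C α * (N : ℝ) ^ α :=
    mul_nonneg (splittingConst_nonneg hC hα) (by positivity)
  rcases lt_or_ge N n with hNn | hNn
  · have : ((N : ℝ) - n) * g ≤ 0 :=
      mul_nonpos_of_nonpos_of_nonneg (by simp [hNn.le]) hg0
    linarith [ha N]
  obtain ⟨k, hle, hlt⟩ := Nat.exists_pow_two_mul_le_lt_two_mul hn hNn
  obtain ⟨r, rfl⟩ := Nat.exists_eq_add_of_le hle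
  have hdyadic := hg k
  rcases Nat.eq_zero_or_pos r with rfl | hr
  · simp only [add_zero] at hdyadic hcost ⊢
    linarith [mul_nonneg (Nat.cast_nonneg n) hg0]
  have hsplit := h (2 ^ k * n) r (Nat.one_le_iff_ne_zero.2 (by positivity)) hr
  have hrest := ih r (by omega)
  have hcosts := splittingConst_mul_rpow_add_le hC hα (by omega : 2 * r ≤ 2 ^ k * n + r)
  push_cast at hdyadic hsplit hcosts ⊢
  linarith

lemma ofReal_dyadicRate_le_liminf (h : NearSuperadditive a C α) (ha : ∀ N, 0 ≤ a N) (hC : 0 ≤ C)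
    (hα : α ∈ Set.Ioo 0 1) {n : ℕ} (hn : 1 ≤ n) :
    ENNReal.ofReal (dyadicRate a C α n) ≤
      liminf (fun N : ℕ => ENNReal.ofReal (a N / N)) atTop := by
  set g := dyadicRate a C α n
  set E := splittingConst C α
  have hlower : Tendsto (fun N : ℕ => g - n * g / N - E * (N : ℝ) ^ (α - 1)) atTop (nhds g) := by
    simpa using ((tendsto_const_div_atTop_nhds_zero_nat (n * g)).const_sub g).sub
      ((tendsto_natCast_rpow_sub_one_atTop hα.2).const_mul E)
  rw [← (ENNReal.tendsto_ofReal hlower).liminf_eq]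
  refine liminf_le_liminf (Eventually.mono (eventually_ge_atTop 1) fun N hN => ?_)
  refine ENNReal.ofReal_le_ofReal ((le_div_iff₀ (by positivity)).2 ?_)
  have hN : (N : ℝ) ≠ 0 := by positivity
  calc (g - n * g / N - E * (N : ℝ) ^ (α - 1)) * N = ((N : ℝ) - n) * g - E * (N : ℝ) ^ α := by
        rw [Real.rpow_sub_one hN]
        field_simp
    _ ≤ a N := sub_mul_sub_le_of_dyadic h ha hC hα.1 hn (dyadicRate_nonneg n)
        (mul_dyadicRate_le h ha hC hα.2 hn) N

end NearSuperadditive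

/-- Modified super-additivity (Proposition in Appendix B): if a nonnegative sequence
`a` satisfies `a (N₁ + N₂) ≥ a N₁ + a N₂ − C (N₁ + N₂)^α` for all `N₁, N₂ ≥ 1`, with
`α ∈ (0,1)` and `C ≥ 0`, then `a N / N` converges in `[0, +∞]` as `N → ∞`. -/
theorem near_superadditive_limit (α C : ℝ) (hα : α ∈ Set.Ioo (0 : ℝ) 1) (hC : 0 ≤ C)
    (a : ℕ → ℝ) (ha : ∀ N : ℕ, 0 ≤ a N)
    (hsup : ∀ N₁ N₂ : ℕ, 1 ≤ N₁ → 1 ≤ N₂ →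
      a (N₁ + N₂) ≥ a N₁ + a N₂ - C * (((N₁ + N₂ : ℕ) : ℝ)) ^ α) :
    ∃ l : ℝ≥0∞,
      Tendsto (fun N : ℕ => ENNReal.ofReal (a N / (N : ℝ))) atTop (nhds l) := by
  open NearSuperadditive in
  set D := doublingConst C α
  have hD : Tendsto (fun n : ℕ => ENNReal.ofReal (D * (n : ℝ) ^ (α - 1))) atTop (nhds 0) := by
    simpa using ENNReal.tendsto_ofReal ((tendsto_natCast_rpow_sub_one_atTop hα.2).const_mul D)
  refine ⟨_, tendsto_liminf_of_le_liminf_add hD ?_⟩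
  filter_upwards [eventually_ge_atTop 1] with n hn
  calc ENNReal.ofReal (a n / n)
      ≤ ENNReal.ofReal (dyadicRate a C α n) + ENNReal.ofReal (D * (n : ℝ) ^ (α - 1)) :=
        (ENNReal.ofReal_le_ofReal (div_le_dyadicRate_add hn)).trans ENNReal.ofReal_add_le
    _ ≤ _ := add_le_add_left (ofReal_dyadicRate_le_liminf hsup ha hC hα hn) _
end
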